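/- arXiv:2203.07898 — 2 statements merged into one kernel-verified Lean document; each statement's English description precedes it below -/
import Mathlib

section
/- Let π = (π₁,…,π_n) and σ = (σ₁,…,σ_m) be curves in ℝ^d equipped with the L₁ norm, let T = ((i₁,j₁),…,(i_L,j_L)) be a fixed traversal, and let Q = ∏_{k=1}^{d} [x_k, x'_k] be an axis-parallel box such that for every i ∈ [n], j ∈ [m], k ∈ [d] the value π_i[k] − σ_j[k] does not lie in the open interval (x_k, x'_k). Then the function τ ↦ Σ_{ℓ=1}^{L} ‖π_{i_ℓ} − (σ_{j_ℓ} + τ)‖₁ is affine on Q. -/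
open Finset

/-- A traversal of two curves of lengths `n` and `m` (1-indexed): a nonempty list of
index pairs starting at `(1,1)`, ending at `(n,m)`, where each step increases the first
index, the second index, or both, by one. -/
def IsTraversal (n m : ℕ) (T : List (ℕ × ℕ)) : Prop :=
  T.head? = some (1, 1) ∧ T.getLast? = some (n, m) ∧
  ∀ ℓ : ℕ, ℓ + 1 < T.length →
    T.getD (ℓ + 1) (0, 0) = ((T.getD ℓ (0, 0)).1 + 1, (T.getD ℓ (0, 0)).2) ∨
    T.getD (ℓ + 1) (0, 0) = ((T.getD ℓ (0, 0)).1, (T.getD ℓ (0, 0)).2 + 1) ∨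
    T.getD (ℓ + 1) (0, 0) = ((T.getD ℓ (0, 0)).1 + 1, (T.getD ℓ (0, 0)).2 + 1)

/-- The `L₁` norm on `ℝ^d`. -/
def l1norm {d : ℕ} (x : Fin d → ℝ) : ℝ := ∑ k, |x k|

/-- The dynamic time warping distance, with respect to the `L₁` norm on `ℝ^d`, of two
curves `π = (π 1, …, π n)` and `σ = (σ 1, …, σ m)`: the minimum, over all traversals, of
the sum of the `L₁` distances of the paired points. -/
noncomputable def dtwL1 {d : ℕ} (n m : ℕ) (π σ : ℕ → Fin d → ℝ) : ℝ :=
  sInf {c : ℝ | ∃ T : List (ℕ × ℕ), IsTraversal n m T ∧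
    (T.map fun p => l1norm (π p.1 - σ p.2)).sum = c}


/-! On the box `Q`, none of the coordinate differences `π_i[k] - σ_j[k] - τ_k` met along the
traversal changes sign, so every absolute value in the cost is an affine function of `τ` there.
Functions that agree with an affine map on a fixed set form a submodule, so the cost, a sum of
such terms, is affine on `Q` as well. -/

namespace IsTraversal

variable {n m : ℕ} {T : List (ℕ × ℕ)}

theorem getD_mono (hT : IsTraversal n m T) {ℓ ℓ' : ℕ} (hℓ : ℓ ≤ ℓ') (hℓ' : ℓ' < T.length) :
    T.getD ℓ (0, 0) ≤ T.getD ℓ' (0, 0) := by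
  induction ℓ', hℓ using Nat.le_induction with
  | base => rfl
  | succ ℓ' _ ih =>
    refine (ih (by omega)).trans ?_
    rcases hT.2.2 ℓ' hℓ' with h | h | h <;> rw [h, Prod.le_def] <;> simp

theorem mem_Icc_of_mem (hT : IsTraversal n m T) {p : ℕ × ℕ} (hp : p ∈ T) :
    p.1 ∈ Icc 1 n ∧ p.2 ∈ Icc 1 m := by
  obtain ⟨ℓ, hℓ, rfl⟩ := List.getElem_of_mem hp
  have hfirst : T.getD 0 (0, 0) = (1, 1) := by
    rw [List.getD_eq_getElem?_getD, ← List.head?_eq_getElem?, hT.1, Option.getD_some]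
  have hlast : T.getD (T.length - 1) (0, 0) = (n, m) := by
    rw [List.getD_eq_getElem?_getD, ← List.getLast?_eq_getElem?, hT.2.1, Option.getD_some]
  have hlow := hT.getD_mono (Nat.zero_le ℓ) hℓ
  have hhigh := hT.getD_mono (ℓ := ℓ) (ℓ' := T.length - 1) (by omega) (by omega)
  rw [hfirst, List.getD_eq_getElem _ _ hℓ, Prod.le_def] at hlow
  rw [hlast, List.getD_eq_getElem _ _ hℓ, Prod.le_def] at hhigh
  simp only [Finset.mem_Icc]
  omega

end IsTraversal

section AffineOn

variable (k : Type*) {V P W : Type*} [CommRing k] [AddCommGroup V] [Module k V] [AddTorsor V P]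
  [AddCommGroup W] [Module k W]

def affineOn (s : Set P) : Submodule k (P → W) where
  carrier := {f | ∃ A : P →ᵃ[k] W, Set.EqOn f A s}
  add_mem' := by
    rintro f g ⟨A, hA⟩ ⟨B, hB⟩
    exact ⟨A + B, fun x hx => congrArg₂ (· + ·) (hA hx) (hB hx)⟩
  zero_mem' := ⟨0, fun _ _ => rfl⟩
  smul_mem' := by
    rintro c f ⟨A, hA⟩
    exact ⟨c • A, fun x hx => congrArg (c • ·) (hA hx)⟩

variable {k}

theorem affineOn_anti {s t : Set P} (hst : s ⊆ t) : affineOn k (W := W) t ≤ affineOn k s := by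
  rintro _ ⟨A, hA⟩
  exact ⟨A, hA.mono hst⟩

theorem comp_mem_affineOn {V₂ P₂ : Type*} [AddCommGroup V₂] [Module k V₂] [AddTorsor V₂ P₂]
    {s : Set P} {f : P → W} (hf : f ∈ affineOn k s) (L : P₂ →ᵃ[k] P) :
    f ∘ L ∈ affineOn k (L ⁻¹' s) :=
  let ⟨A, hA⟩ := hf
  ⟨A.comp L, fun _ hx => hA hx⟩

end AffineOn

theorem abs_sub_mem_affineOn_Icc {a b v : ℝ} (hv : v ∉ Set.Ioo a b) :
    (fun t => |v - t|) ∈ affineOn ℝ (Set.Icc a b) := by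
  rcases le_or_gt b v with hbv | hvb
  · refine ⟨AffineMap.const ℝ ℝ v - AffineMap.id ℝ ℝ, fun t ht => ?_⟩
    simp [abs_of_nonneg (sub_nonneg.2 (ht.2.trans hbv))]
  · have hva : v ≤ a := not_lt.1 fun hav => hv ⟨hav, hvb⟩
    refine ⟨AffineMap.id ℝ ℝ - AffineMap.const ℝ ℝ v, fun t ht => ?_⟩
    simp [abs_of_nonpos (sub_nonpos.2 (hva.trans ht.1))]

theorem l1norm_sub_mem_affineOn_Icc {d : ℕ} {v x x' : Fin d → ℝ}
    (hv : ∀ k, v k ∉ Set.Ioo (x k) (x' k)) :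
    (fun τ => l1norm (v - τ)) ∈ affineOn ℝ (Set.Icc x x') := by
  have hsum : (fun τ => l1norm (v - τ)) = ∑ k, fun τ : Fin d → ℝ => |v k - τ k| := by
    ext τ
    simp [l1norm]
  rw [hsum]
  refine Submodule.sum_mem _ fun k _ => ?_
  have hcoord := comp_mem_affineOn (abs_sub_mem_affineOn_Icc (hv k))
    (LinearMap.proj (R := ℝ) (φ := fun _ : Fin d => ℝ) k).toAffineMap
  refine affineOn_anti ?_ hcoord
  exact fun τ hτ => ⟨hτ.1 k, hτ.2 k⟩

theorem traversal_cost_affine_on_cell_general (d n m : ℕ) (π σ : ℕ → Fin d → ℝ)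
    (T : List (ℕ × ℕ)) (hT : IsTraversal n m T)
    (x x' : Fin d → ℝ)
    (hgrid : ∀ i ∈ Finset.Icc 1 n, ∀ j ∈ Finset.Icc 1 m, ∀ k : Fin d,
      π i k - σ j k ∉ Set.Ioo (x k) (x' k)) :
    ∃ (g : (Fin d → ℝ) →ₗ[ℝ] ℝ) (c : ℝ),
      ∀ τ ∈ Set.Icc x x',
        (T.map fun p => l1norm (π p.1 - (σ p.2 + τ))).sum = g τ + c := by
  have hcost : (fun τ => (T.map fun p => l1norm (π p.1 - (σ p.2 + τ))).sum) ∈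
      affineOn ℝ (Set.Icc x x') := by
    have hfun : (fun τ => (T.map fun p => l1norm (π p.1 - (σ p.2 + τ))).sum) =
        (T.map fun p τ => l1norm (π p.1 - σ p.2 - τ)).sum := by
      ext τ
      simp [Pi.list_sum_apply, Function.comp_def, sub_add_eq_sub_sub]
    rw [hfun]
    refine list_sum_mem (List.forall_mem_map.2 fun p hp => ?_)
    obtain ⟨hi, hj⟩ := hT.mem_Icc_of_mem hp
    exact l1norm_sub_mem_affineOn_Icc (hgrid _ hi _ hj)
  obtain ⟨A, hA⟩ := hcost
  exact ⟨A.linear, A 0, fun τ hτ => (hA hτ).trans (congrFun A.decomp τ)⟩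

/-- For a fixed traversal `T`, if for all `i ∈ [n]`, `j ∈ [m]` and coordinates `k` the
value `π_i[k] - σ_j[k]` does not lie in the open interval `(x_k, x'_k)`, then the cost
`τ ↦ Σ_{(i,j) ∈ T} ‖π_i - (σ_j + τ)‖₁` is affine on the box `Q = ∏ₖ [x_k, x'_k]`. -/
theorem traversal_cost_affine_on_cell (d n m : ℕ) (π σ : ℕ → Fin d → ℝ)
    (T : List (ℕ × ℕ)) (hT : IsTraversal n m T)
    (x x' : Fin d → ℝ) (hxx : x ≤ x')
    (hgrid : ∀ i ∈ Finset.Icc 1 n, ∀ j ∈ Finset.Icc 1 m, ∀ k : Fin d,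
      π i k - σ j k ∉ Set.Ioo (x k) (x' k)) :
    ∃ (g : (Fin d → ℝ) →ₗ[ℝ] ℝ) (c : ℝ),
      ∀ τ ∈ Set.Icc x x',
        (T.map fun p => l1norm (π p.1 - (σ p.2 + τ))).sum = g τ + c :=
  traversal_cost_affine_on_cell_general d n m π σ T hT x x' hgrid
end

section
/- Fix p ∈ [1,∞) and equip ℝ² with the L_p norm. Let b > 0, let n ≥ 1, and let π and σ be curves in ℝ² with at most n vertices each, all of whose points lie in the closed L_p-ball of radius b centered at the origin. Let r := (5nb, 0), and let π' := r^{2n} ∘ π and σ' := r^{2n} ∘ σ be the curves obtained by prepending 2n copies of the point r to π and σ respectively. Then for every translation τ ∈ ℝ², d_DTW(π', σ' + τ) ≥ d_DTW(π, σ). -/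
/-! A traversal of the padded curves either pairs a copy of `r` with a point of `π` or of
`σ + τ`, or it runs diagonally through the padding. In the first case it pays `‖τ‖` at `(1, 1)`
and, by the triangle inequality, at least `‖r‖ - b - ‖τ‖` at the mixed pair, and `‖r‖ - b`
exceeds the bound `(n₁ + n₂ - 1) · 2b` on `d_DTW(π, σ)` given by any traversal. In the second
case it reaches `(2n + 1, 2n + 1)` after at least `2n` pairs of cost `‖τ‖`, and the rest, shifted
back, is a traversal of `π, σ` with at most `n₁ + n₂ - 1 < 2n` pairs; undoing the translation
by `τ` costs at most `‖τ‖` per pair. -/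

open Finset

/-- The dynamic time warping distance of two curves `π = (π 1, …, π n)` and
`σ = (σ 1, …, σ m)`: the minimum, over all traversals, of the sum of the distances
of the paired points. -/
noncomputable def dtw {E : Type*} [NormedAddCommGroup E] (n m : ℕ) (π σ : ℕ → E) : ℝ :=
  sInf {c : ℝ | ∃ T : List (ℕ × ℕ), IsTraversal n m T ∧
    (T.map fun p => ‖π p.1 - σ p.2‖).sum = c}

def TraversalStep (a b : ℕ × ℕ) : Prop :=
  b = (a.1 + 1, a.2) ∨ b = (a.1, a.2 + 1) ∨ b = (a.1 + 1, a.2 + 1)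

theorem isTraversal_iff {n m : ℕ} {T : List (ℕ × ℕ)} :
    IsTraversal n m T ↔
      T.head? = some (1, 1) ∧ T.getLast? = some (n, m) ∧ T.IsChain TraversalStep := by
  refine and_congr_right fun _ => and_congr_right fun _ => ?_
  rw [List.isChain_iff_getElem]
  refine forall_congr' fun ℓ => ⟨fun h hℓ => ?_, fun h hℓ => ?_⟩ <;>
  · have h := h hℓ
    rwa [List.getD_eq_getElem _ _ hℓ, List.getD_eq_getElem _ _ (by omega)] at *

namespace TraversalStep

variable {a b : ℕ × ℕ}

theorem le (h : TraversalStep a b) : a ≤ b := by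
  rcases h with rfl | rfl | rfl <;> simp [Prod.le_def]

theorem fst_le (h : TraversalStep a b) : b.1 ≤ a.1 + 1 := by
  rcases h with rfl | rfl | rfl <;> simp

theorem add_lt (h : TraversalStep a b) : a.1 + a.2 < b.1 + b.2 := by
  rcases h with rfl | rfl | rfl <;> simp only <;> omega

end TraversalStep

section Chain

variable {α : Type*} {R : α → α → Prop} {a z : α} {l : List α}

theorem List.IsChain.le_add_length_of_step_le {g : α → ℕ} (hg : ∀ x y, R x y → g y ≤ g x + 1)
    (hl : l.IsChain R) (ha : l.head? = some a) (hz : l.getLast? = some z) :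
    g z + 1 ≤ g a + l.length := by
  induction l generalizing a with
  | nil => simp at ha
  | cons x t ih =>
    obtain rfl : x = a := by simpa using ha
    rcases t with _ | ⟨y, t⟩
    · obtain rfl : x = z := by simpa using hz
      simp
    · rw [List.isChain_cons_cons] at hl
      have hyz := ih hl.2 rfl (by simpa using hz)
      have hxy := hg _ _ hl.1
      simp only [List.length_cons] at hyz ⊢
      omega

theorem List.IsChain.add_length_le_of_lt_step {g : α → ℕ} (hg : ∀ x y, R x y → g x < g y)
    (hl : l.IsChain R) (ha : l.head? = some a) (hz : l.getLast? = some z) :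
    g a + l.length ≤ g z + 1 := by
  induction l generalizing a with
  | nil => simp at ha
  | cons x t ih =>
    obtain rfl : x = a := by simpa using ha
    rcases t with _ | ⟨y, t⟩
    · obtain rfl : x = z := by simpa using hz
      simp
    · rw [List.isChain_cons_cons] at hl
      have hyz := ih hl.2 rfl (by simpa using hz)
      have hxy := hg _ _ hl.1
      simp only [List.length_cons] at hyz ⊢
      omega

theorem List.exists_append_cons_of_exists_not {p : α → Prop}
    (h : ∃ x ∈ l, ¬p x) : ∃ A b B, l = A ++ b :: B ∧ (∀ q ∈ A, p q) ∧ ¬p b := by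
  induction l with
  | nil => simp at h
  | cons x t ih =>
    by_cases hx : p x
    · obtain ⟨A, b, B, rfl, hA, hb⟩ := ih (by simpa [hx] using h)
      exact ⟨x :: A, b, B, rfl, by simpa [hx] using hA, hb⟩
    · exact ⟨[], x, t, rfl, by simp, hx⟩

variable [Preorder α]

theorem List.IsChain.head_le_of_mem (hl : l.IsChain (· ≤ ·)) (ha : l.head? = some a) {q : α}
    (hq : q ∈ l) : a ≤ q := by
  obtain ⟨t, rfl⟩ := List.head?_eq_some_iff.1 ha
  rcases List.mem_cons.1 hq with rfl | hq
  · exact le_rfl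
  · exact List.rel_of_pairwise_cons hl.pairwise hq

theorem List.IsChain.le_getLast_of_mem (hl : l.IsChain (· ≤ ·)) (hz : l.getLast? = some z)
    {q : α} (hq : q ∈ l) : q ≤ z := by
  obtain ⟨t, rfl⟩ := List.getLast?_eq_some_iff.1 hz
  rcases List.mem_append.1 hq with hq | hq
  · exact (List.pairwise_append.1 hl.pairwise).2.2 q hq z (List.mem_singleton_self z)
  · rw [List.mem_singleton.1 hq]

end Chain

namespace IsTraversal

variable {n m : ℕ} {T : List (ℕ × ℕ)}

theorem isChain_le (hT : IsTraversal n m T) : T.IsChain (· ≤ ·) :=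
  (isTraversal_iff.1 hT).2.2.imp fun _ _ => TraversalStep.le

theorem one_le_of_mem (hT : IsTraversal n m T) {q : ℕ × ℕ} (hq : q ∈ T) : (1, 1) ≤ q :=
  hT.isChain_le.head_le_of_mem hT.1 hq

theorem le_of_mem (hT : IsTraversal n m T) {q : ℕ × ℕ} (hq : q ∈ T) : q ≤ (n, m) :=
  hT.isChain_le.le_getLast_of_mem hT.2.1 hq

theorem length_add_one_le (hT : IsTraversal n m T) : T.length + 1 ≤ n + m := by
  have := (isTraversal_iff.1 hT).2.2.add_length_le_of_lt_step (g := fun q => q.1 + q.2)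
    (fun _ _ => TraversalStep.add_lt) hT.1 hT.2.1
  simp only at this
  omega

theorem append_singleton (hT : IsTraversal n m T) {z : ℕ × ℕ} (hz : TraversalStep (n, m) z) :
    IsTraversal z.1 z.2 (T ++ [z]) := by
  obtain ⟨hh, hl, hc⟩ := isTraversal_iff.1 hT
  refine isTraversal_iff.2 ⟨?_, by simp, hc.append (List.isChain_singleton z) ?_⟩
  · rwa [List.head?_append_of_ne_nil _ (by rintro rfl; simp at hh)]
  · simpa [hl] using hz

end IsTraversal

theorem exists_isTraversal {n m : ℕ} (hn : 1 ≤ n) (hm : 1 ≤ m) : ∃ T, IsTraversal n m T := by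
  induction m, hm using Nat.le_induction with
  | base =>
    induction n, hn using Nat.le_induction with
    | base => exact ⟨[(1, 1)], isTraversal_iff.2 ⟨rfl, rfl, List.isChain_singleton _⟩⟩
    | succ k _ ih =>
      obtain ⟨T, hT⟩ := ih
      exact ⟨_, hT.append_singleton (Or.inl rfl)⟩
  | succ k _ ih =>
    obtain ⟨T, hT⟩ := ih
    exact ⟨_, hT.append_singleton (Or.inr (Or.inl rfl))⟩

section Cost

variable {E : Type*} [NormedAddCommGroup E]

def traversalCost (π σ : ℕ → E) (T : List (ℕ × ℕ)) : ℝ :=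
  (T.map fun p => ‖π p.1 - σ p.2‖).sum

theorem traversalCost_nonneg (π σ : ℕ → E) (T : List (ℕ × ℕ)) : 0 ≤ traversalCost π σ T :=
  List.sum_nonneg (by simp only [List.mem_map]; rintro _ ⟨q, -, rfl⟩; positivity)

theorem traversalCost_append (π σ : ℕ → E) (A B : List (ℕ × ℕ)) :
    traversalCost π σ (A ++ B) = traversalCost π σ A + traversalCost π σ B := by
  simp [traversalCost]

theorem traversalCost_le_length_mul {π σ : ℕ → E} {T : List (ℕ × ℕ)} {c : ℝ}
    (h : ∀ q ∈ T, ‖π q.1 - σ q.2‖ ≤ c) : traversalCost π σ T ≤ T.length * c := by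
  have := List.sum_le_card_nsmul (T.map fun p => ‖π p.1 - σ p.2‖) c
    (by simp only [List.mem_map]; rintro _ ⟨q, hq, rfl⟩; exact h q hq)
  simpa [traversalCost] using this

theorem traversalCost_le_add_length_mul_norm (π σ : ℕ → E) (T : List (ℕ × ℕ)) (τ : E) :
    traversalCost π σ T ≤ traversalCost π (fun j => σ j + τ) T + T.length * ‖τ‖ := by
  have := List.sum_le_sum (l := T) (f := fun q => ‖π q.1 - σ q.2‖)
    (g := fun q => ‖π q.1 - (σ q.2 + τ)‖ + ‖τ‖) fun q _ => by
      simpa [sub_add_eq_sub_sub] using norm_le_norm_sub_add (π q.1 - σ q.2) τ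
  simpa [traversalCost, List.sum_map_add] using this

theorem traversalCost_head_add_le {π σ : ℕ → E} {n m : ℕ} {T : List (ℕ × ℕ)}
    (hT : IsTraversal n m T) {q : ℕ × ℕ} (hq : q ∈ T) (hq₁ : q ≠ (1, 1)) :
    ‖π 1 - σ 1‖ + ‖π q.1 - σ q.2‖ ≤ traversalCost π σ T := by
  obtain ⟨t, rfl⟩ := List.head?_eq_some_iff.1 hT.1
  have hqt : q ∈ t := (List.mem_cons.1 hq).resolve_left hq₁
  simp only [traversalCost, List.map_cons, List.sum_cons]
  gcongr
  exact List.single_le_sum (by simp only [List.mem_map]; rintro _ ⟨q, -, rfl⟩; positivity) _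
    (List.mem_map_of_mem hqt)

theorem dtw_le_traversalCost {π σ : ℕ → E} {n m : ℕ} {T : List (ℕ × ℕ)}
    (hT : IsTraversal n m T) : dtw n m π σ ≤ traversalCost π σ T :=
  csInf_le ⟨0, by rintro _ ⟨T, -, rfl⟩; exact traversalCost_nonneg π σ T⟩ ⟨T, hT, rfl⟩

theorem le_dtw {π σ : ℕ → E} {n m : ℕ} (hn : 1 ≤ n) (hm : 1 ≤ m) {c : ℝ}
    (h : ∀ T, IsTraversal n m T → c ≤ traversalCost π σ T) : c ≤ dtw n m π σ := by
  obtain ⟨T, hT⟩ := exists_isTraversal hn hm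
  exact le_csInf ⟨_, T, hT, rfl⟩ (by rintro _ ⟨T, hT, rfl⟩; exact h T hT)

theorem dtw_le_of_norm_le {π σ : ℕ → E} {n m : ℕ} (hn : 1 ≤ n) (hm : 1 ≤ m) {b : ℝ}
    (hπ : ∀ i ∈ Icc 1 n, ‖π i‖ ≤ b) (hσ : ∀ j ∈ Icc 1 m, ‖σ j‖ ≤ b) :
    dtw n m π σ ≤ (n + m - 1) * (2 * b) := by
  obtain ⟨T, hT⟩ := exists_isTraversal hn hm
  have hb : 0 ≤ b := (norm_nonneg _).trans (hπ 1 (by simp [hn]))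
  have hlen : (T.length : ℝ) ≤ n + m - 1 := by
    have := hT.length_add_one_le
    rw [le_sub_iff_add_le]
    exact_mod_cast this
  calc dtw n m π σ ≤ traversalCost π σ T := dtw_le_traversalCost hT
    _ ≤ T.length * (2 * b) := traversalCost_le_length_mul fun q hq => by
        have h₁ := hT.one_le_of_mem hq
        have h₂ := hT.le_of_mem hq
        have := hπ q.1 (mem_Icc.2 ⟨h₁.1, h₂.1⟩)
        have := hσ q.2 (mem_Icc.2 ⟨h₁.2, h₂.2⟩)
        linarith [norm_sub_le (π q.1) (σ q.2)]
    _ ≤ (n + m - 1) * (2 * b) := by gcongr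

end Cost

theorem isTraversal_map_sub {k n m : ℕ} {B : List (ℕ × ℕ)} (hc : B.IsChain TraversalStep)
    (hh : B.head? = some (k + 1, k + 1)) (hl : B.getLast? = some (k + n, k + m)) :
    IsTraversal n m (B.map fun q => (q.1 - k, q.2 - k)) := by
  refine isTraversal_iff.2 ⟨by simp [hh], by simp [hl], ?_⟩
  rw [List.isChain_map]
  refine hc.imp_of_mem_imp fun a b ha _ hab => ?_
  obtain ⟨h₁, h₂⟩ : k + 1 ≤ a.1 ∧ k + 1 ≤ a.2 :=
    (hc.imp fun _ _ => TraversalStep.le).head_le_of_mem hh ha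
  rcases hab with rfl | rfl | rfl
  · exact .inl (by simp only [Prod.mk.injEq, and_true]; omega)
  · exact .inr (.inl (by simp only [Prod.mk.injEq, true_and]; omega))
  · exact .inr (.inr (by simp only [Prod.mk.injEq]; omega))

theorem IsTraversal.exists_append_of_forall_iff {k n m : ℕ} {T : List (ℕ × ℕ)}
    (hT : IsTraversal (k + n) (k + m) T) (hk : 1 ≤ k) (hn : 1 ≤ n)
    (hdiag : ∀ q ∈ T, (q.1 ≤ k ↔ q.2 ≤ k)) :
    ∃ A B, T = A ++ B ∧ (∀ q ∈ A, q.1 ≤ k ∧ q.2 ≤ k) ∧ k ≤ A.length ∧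
      B.IsChain TraversalStep ∧ B.head? = some (k + 1, k + 1) ∧
      B.getLast? = some (k + n, k + m) := by
  obtain ⟨hh, hl, hc⟩ := isTraversal_iff.1 hT
  obtain ⟨A, b, B', hTAB, hA₁, hb₁⟩ := List.exists_append_cons_of_exists_not (p := (·.1 ≤ k))
    ⟨_, List.mem_of_getLast? hl, by simp only; omega⟩
  rw [not_le] at hb₁
  have hA : ∀ q ∈ A, q.1 ≤ k ∧ q.2 ≤ k := fun q hq =>
    ⟨hA₁ q hq, (hdiag q (by simp [hTAB, hq])).1 (hA₁ q hq)⟩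
  have hb₂ : k < b.2 := lt_of_not_ge fun h => hb₁.not_ge ((hdiag b (by simp [hTAB])).2 h)
  obtain rfl | ⟨A', a, hA'⟩ := List.eq_nil_or_concat A
  · have : b = (1, 1) := by simpa [hTAB] using hh
    rw [this] at hb₁
    omega
  have hab : TraversalStep a b := by
    rw [hTAB, hA', List.concat_eq_append, List.append_assoc, List.singleton_append,
      List.isChain_append] at hc
    simpa using hc.2.1.rel_head?
  have hb : b = (k + 1, k + 1) := by
    have := hA a (by simp [hA'])
    rcases hab with rfl | rfl | rfl <;> simp only [Prod.mk.injEq] at hb₁ hb₂ ⊢ <;> omega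
  have hlen : k ≤ A.length := by
    have hpre : (A ++ [b]).IsChain TraversalStep :=
      hc.prefix ⟨B', by rw [hTAB, List.append_assoc, List.singleton_append]⟩
    have := hpre.le_add_length_of_step_le (g := Prod.fst) (z := b)
      (fun _ _ => TraversalStep.fst_le)
      (by rwa [hTAB, ← List.singleton_append, ← List.append_assoc,
        List.head?_append_of_ne_nil _ (by simp)] at hh) (by simp)
    simp only [List.length_append, List.length_singleton, hb] at this
    omega
  refine ⟨A, b :: B', hTAB, hA, hlen, hc.suffix ⟨A, hTAB.symm⟩, by simp [hb], ?_⟩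
  rwa [hTAB, List.getLast?_append_of_ne_nil _ (List.cons_ne_nil _ _)] at hl

section Prepend

variable {E : Type*} [NormedAddCommGroup E]

def prepend (k : ℕ) (r : E) (π : ℕ → E) : ℕ → E := fun i => if i ≤ k then r else π (i - k)

variable {k n₁ n₂ : ℕ} {π σ : ℕ → E} {r τ : E} {T : List (ℕ × ℕ)}

theorem dtw_le_traversalCost_prepend_of_mem (hT : IsTraversal (k + n₁) (k + n₂) T) (hk : 1 ≤ k)
    (hπ : ∀ i ∈ Icc 1 n₁, dtw n₁ n₂ π σ ≤ ‖π i - r‖)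
    (hσ : ∀ j ∈ Icc 1 n₂, dtw n₁ n₂ π σ ≤ ‖r - σ j‖)
    {q : ℕ × ℕ} (hq : q ∈ T) (hmixed : ¬(q.1 ≤ k ↔ q.2 ≤ k)) :
    dtw n₁ n₂ π σ ≤ traversalCost (prepend k r π) (fun j => prepend k r σ j + τ) T := by
  obtain ⟨h₁, h₂⟩ : q.1 ≤ k + n₁ ∧ q.2 ≤ k + n₂ := hT.le_of_mem hq
  have hq₁ : q ≠ (1, 1) := by rintro rfl; simp [hk] at hmixed
  refine le_trans ?_ (traversalCost_head_add_le hT hq hq₁)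
  simp only [prepend, if_pos hk, sub_add_cancel_left, norm_neg]
  by_cases hle : q.1 ≤ k
  · rw [if_pos hle, if_neg (by tauto)]
    calc dtw n₁ n₂ π σ ≤ ‖r - σ (q.2 - k)‖ := hσ _ (mem_Icc.2 ⟨by omega, by omega⟩)
      _ ≤ ‖r - (σ (q.2 - k) + τ)‖ + ‖σ (q.2 - k) + τ - σ (q.2 - k)‖ :=
        norm_sub_le_norm_sub_add_norm_sub _ _ _
      _ = ‖τ‖ + ‖r - (σ (q.2 - k) + τ)‖ := by rw [add_sub_cancel_left, add_comm]
  · rw [if_neg hle, if_pos (by tauto)]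
    calc dtw n₁ n₂ π σ ≤ ‖π (q.1 - k) - r‖ := hπ _ (mem_Icc.2 ⟨by omega, by omega⟩)
      _ ≤ ‖π (q.1 - k) - (r + τ)‖ + ‖r + τ - r‖ := norm_sub_le_norm_sub_add_norm_sub _ _ _
      _ = ‖τ‖ + ‖π (q.1 - k) - (r + τ)‖ := by rw [add_sub_cancel_left, add_comm]

theorem dtw_le_traversalCost_prepend_of_forall_iff (hT : IsTraversal (k + n₁) (k + n₂) T)
    (hn₁ : 1 ≤ n₁) (hn₂ : 1 ≤ n₂) (hk : n₁ + n₂ ≤ k + 1)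
    (hdiag : ∀ q ∈ T, (q.1 ≤ k ↔ q.2 ≤ k)) :
    dtw n₁ n₂ π σ ≤ traversalCost (prepend k r π) (fun j => prepend k r σ j + τ) T := by
  obtain ⟨A, B, rfl, hA, hAlen, hc, hh, hl⟩ :=
    hT.exists_append_of_forall_iff (by omega) hn₁ hdiag
  set S := B.map fun q => (q.1 - k, q.2 - k)
  have hS : IsTraversal n₁ n₂ S := isTraversal_map_sub hc hh hl
  have hcostA : traversalCost (prepend k r π) (fun j => prepend k r σ j + τ) A
      = A.length * ‖τ‖ := by
    rw [traversalCost, List.sum_eq_card_nsmul _ ‖τ‖, List.length_map, nsmul_eq_mul]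
    simp only [List.mem_map]
    rintro _ ⟨q, hq, rfl⟩
    simp [prepend, (hA q hq).1, (hA q hq).2]
  have hcostB : traversalCost π (fun j => σ j + τ) S
      = traversalCost (prepend k r π) (fun j => prepend k r σ j + τ) B := by
    simp only [traversalCost, S, List.map_map]
    congr 1
    refine List.map_congr_left fun q hq => ?_
    obtain ⟨h₁, h₂⟩ : k + 1 ≤ q.1 ∧ k + 1 ≤ q.2 :=
      (hc.imp fun _ _ => TraversalStep.le).head_le_of_mem hh hq
    simp [prepend, show ¬q.1 ≤ k by omega, show ¬q.2 ≤ k by omega]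
  have hlen : (S.length : ℝ) ≤ A.length := by
    have := hS.length_add_one_le
    exact_mod_cast (by omega : S.length ≤ A.length)
  calc dtw n₁ n₂ π σ ≤ traversalCost π σ S := dtw_le_traversalCost hS
    _ ≤ traversalCost π (fun j => σ j + τ) S + S.length * ‖τ‖ :=
      traversalCost_le_add_length_mul_norm π σ S τ
    _ ≤ _ := by
      rw [hcostB, traversalCost_append, hcostA, add_comm (_ * ‖τ‖)]
      gcongr

theorem dtw_le_dtw_prepend (hn₁ : 1 ≤ n₁) (hn₂ : 1 ≤ n₂) (hk : n₁ + n₂ ≤ k + 1)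
    (hπ : ∀ i ∈ Icc 1 n₁, dtw n₁ n₂ π σ ≤ ‖π i - r‖)
    (hσ : ∀ j ∈ Icc 1 n₂, dtw n₁ n₂ π σ ≤ ‖r - σ j‖) (τ : E) :
    dtw n₁ n₂ π σ ≤ dtw (k + n₁) (k + n₂) (prepend k r π) (fun j => prepend k r σ j + τ) :=
  le_dtw (by omega) (by omega) fun T hT => by
    by_cases hdiag : ∀ q ∈ T, (q.1 ≤ k ↔ q.2 ≤ k)
    · exact dtw_le_traversalCost_prepend_of_forall_iff hT hn₁ hn₂ hk hdiag
    · simp only [not_forall] at hdiag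
      obtain ⟨q, hq, hmixed⟩ := hdiag
      exact dtw_le_traversalCost_prepend_of_mem hT (by omega) hπ hσ hq hmixed

end Prepend

open scoped ENNReal

theorem dtw_prepended_ge_general (p : ℝ≥0∞) [Fact (1 ≤ p)]
    (b : ℝ) (n n₁ n₂ : ℕ)
    (hn₁ : 1 ≤ n₁) (hn₁n : n₁ ≤ n) (hn₂ : 1 ≤ n₂) (hn₂n : n₂ ≤ n)
    (π σ : ℕ → PiLp p fun _ : Fin 2 => ℝ)
    (hπ : ∀ i ∈ Finset.Icc 1 n₁, ‖π i‖ ≤ b) (hσ : ∀ j ∈ Finset.Icc 1 n₂, ‖σ j‖ ≤ b)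
    (r : PiLp p fun _ : Fin 2 => ℝ)
    (hr : r = (WithLp.equiv p (Fin 2 → ℝ)).symm ![5 * n * b, 0])
    (π' σ' : ℕ → PiLp p fun _ : Fin 2 => ℝ)
    (hπ' : ∀ i, π' i = if i ≤ 2 * n then r else π (i - 2 * n))
    (hσ' : ∀ j, σ' j = if j ≤ 2 * n then r else σ (j - 2 * n)) :
    ∀ τ : PiLp p fun _ : Fin 2 => ℝ,
      dtw n₁ n₂ π σ ≤ dtw (2 * n + n₁) (2 * n + n₂) π' (fun j => σ' j + τ) := by
  intro τ
  have hb : 0 ≤ b := (norm_nonneg _).trans (hπ 1 (by simp [hn₁]))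
  have hr_norm : ‖r‖ = 5 * n * b := by
    rw [hr, show (WithLp.equiv p (Fin 2 → ℝ)).symm ![5 * n * b, 0] = PiLp.single p 0 (5 * n * b)
      by ext i; fin_cases i <;> simp, PiLp.norm_single, Real.norm_of_nonneg (by positivity)]
  have hdtw : dtw n₁ n₂ π σ ≤ ‖r‖ - b := by
    have : (n₁ + n₂ : ℝ) ≤ 2 * n := by exact_mod_cast (by omega : n₁ + n₂ ≤ 2 * n)
    calc dtw n₁ n₂ π σ ≤ (n₁ + n₂ - 1) * (2 * b) := dtw_le_of_norm_le hn₁ hn₂ hπ hσ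
      _ ≤ ‖r‖ - b := by rw [hr_norm]; nlinarith
  obtain rfl : π' = prepend (2 * n) r π := funext hπ'
  obtain rfl : σ' = prepend (2 * n) r σ := funext hσ'
  refine dtw_le_dtw_prepend hn₁ hn₂ (by omega) (fun i hi => ?_) (fun j hj => ?_) τ
  · linarith [hπ i hi, norm_sub_norm_le r (π i), norm_sub_rev r (π i)]
  · linarith [hσ j hj, norm_sub_norm_le r (σ j)]

/-- Let `π, σ` be curves in `ℝ²` (with the `L_p` norm, `1 ≤ p < ∞`) with `n₁, n₂ ≤ n`
vertices, all points lying in the closed ball of radius `b` around the origin, and let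
`π', σ'` be obtained from `π, σ` by prepending `2n` copies of the point `r = (5nb, 0)`.
Then for every translation `τ`, `d_DTW(π', σ' + τ) ≥ d_DTW(π, σ)`. -/
theorem dtw_prepended_ge (p : ℝ≥0∞) [Fact (1 ≤ p)] (hp : p ≠ ⊤)
    (b : ℝ) (hb : 0 < b) (n n₁ n₂ : ℕ) (hn : 1 ≤ n)
    (hn₁ : 1 ≤ n₁) (hn₁n : n₁ ≤ n) (hn₂ : 1 ≤ n₂) (hn₂n : n₂ ≤ n)
    (π σ : ℕ → PiLp p fun _ : Fin 2 => ℝ)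
    (hπ : ∀ i ∈ Finset.Icc 1 n₁, ‖π i‖ ≤ b) (hσ : ∀ j ∈ Finset.Icc 1 n₂, ‖σ j‖ ≤ b)
    (r : PiLp p fun _ : Fin 2 => ℝ)
    (hr : r = (WithLp.equiv p (Fin 2 → ℝ)).symm ![5 * n * b, 0])
    (π' σ' : ℕ → PiLp p fun _ : Fin 2 => ℝ)
    (hπ' : ∀ i, π' i = if i ≤ 2 * n then r else π (i - 2 * n))
    (hσ' : ∀ j, σ' j = if j ≤ 2 * n then r else σ (j - 2 * n)) :
    ∀ τ : PiLp p fun _ : Fin 2 => ℝ,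
      dtw n₁ n₂ π σ ≤ dtw (2 * n + n₁) (2 * n + n₂) π' (fun j => σ' j + τ) :=
  dtw_prepended_ge_general p b n n₁ n₂ hn₁ hn₁n hn₂ hn₂n π σ hπ hσ r hr π' σ' hπ' hσ'
end
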